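/- arXiv:2304.07685 — 2 statements merged into one kernel-verified Lean document; each statement's English description precedes it below -/
import Mathlib

section
/- Let X and U be Polish spaces and let μ_n be a sequence of probability measures on X × U all having the same X-marginal ν. If μ_n converges weakly to a probability measure μ (which then also has X-marginal ν), then for every bounded measurable function g: X × U → ℝ such that u ↦ g(x,u) is continuous for each fixed x, we have ∫ g dμ_n → ∫ g dμ. -/
/-!
The `U`-marginals of `μₙ` converge weakly, so they form a tight family: a single compact
`K ⊆ U` carries all but `δ` of each of them and of the `U`-marginal of `μ`. On the strip `X × K`,
`g` is a measurable map `G : X → C(K, ℝ)` into a separable Banach space, so it can be approximated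
in `L¹(ν)` by a continuous `H`; clamping `H` to `[-C, C]` and extending it from the closed strip by
Tietze gives a bounded continuous `g'`. Because every measure involved has `X`-marginal `ν`, the
error `∫ |g - g'|` is at most `‖G - H‖_{L¹(ν)} + 2Cδ` uniformly in `n`, and weak convergence
applies to `g'`.
-/

open MeasureTheory Filter Topology Set TopologicalSpace
open scoped ENNReal

lemma tendsto_of_forall_dist_le {α ι : Type*} [PseudoMetricSpace α] {l : Filter ι}
    {a : ι → α} {a₀ : α}
    (h : ∀ ε > 0, ∃ (b : ι → α) (b₀ : α), Tendsto b l (𝓝 b₀) ∧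
      (∀ i, dist (a i) (b i) ≤ ε) ∧ dist a₀ b₀ ≤ ε) :
    Tendsto a l (𝓝 a₀) := by
  refine Metric.tendsto_nhds.2 fun ε hε => ?_
  obtain ⟨b, b₀, hb, hab, hab₀⟩ := h (ε / 4) (by positivity)
  filter_upwards [Metric.tendsto_nhds.1 hb (ε / 4) (by positivity)] with i hi
  calc dist (a i) a₀ ≤ dist (a i) (b i) + dist (b i) b₀ + dist b₀ a₀ := dist_triangle4 _ _ _ _
    _ < ε := by linarith [hab i, dist_comm a₀ b₀]

lemma ContinuousMap.measurable_of_forall_measurable_apply {α K : Type*} [MeasurableSpace α]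
    [TopologicalSpace K] [CompactSpace K] [MetrizableSpace K]
    [MeasurableSpace C(K, ℝ)] [BorelSpace C(K, ℝ)] {f : α → C(K, ℝ)}
    (hf : ∀ k, Measurable fun a => f a k) : Measurable f := by
  rcases isEmpty_or_nonempty K with hK | hK
  · exact measurable_const' fun _ _ => Subsingleton.elim _ _
  obtain ⟨d, hd⟩ := exists_dense_seq K
  -- Lusin–Souslin: evaluation on a dense sequence embeds the Polish space `C(K, ℝ)` measurably.
  have he : MeasurableEmbedding fun (h : C(K, ℝ)) (i : ℕ) => h (d i) :=
    (continuous_pi fun i => continuous_eval_const (d i)).measurableEmbedding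
      fun h h' hhh' => ContinuousMap.ext <| congrFun <|
        Continuous.ext_on hd h.continuous h'.continuous <| by
          rintro _ ⟨i, rfl⟩; exact congrFun hhh' i
  exact he.measurable_comp_iff.1 (measurable_pi_iff.2 fun i => hf (d i))

lemma ProbabilityMeasure.exists_isCompact_measure_compl_le_of_tendsto {V : Type*}
    [TopologicalSpace V] [PolishSpace V] [MeasurableSpace V] [BorelSpace V]
    {P : ProbabilityMeasure V} {Ps : ℕ → ProbabilityMeasure V} (h : Tendsto Ps atTop (𝓝 P))
    {ε : ℝ≥0∞} (hε : 0 < ε) :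
    ∃ K, IsCompact K ∧ (P : Measure V) Kᶜ ≤ ε ∧ ∀ n, (Ps n : Measure V) Kᶜ ≤ ε := by
  let := upgradeIsCompletelyMetrizable V
  have hS := h.isCompact_insert_range
  obtain ⟨K, hK, hKS⟩ := isTightMeasureSet_iff_exists_isCompact_measure_compl_le.1
    (isTightMeasureSet_of_isCompact_closure (hS.isClosed.closure_eq ▸ hS)) ε hε
  exact ⟨K, hK, hKS _ ⟨P, mem_insert _ _, rfl⟩,
    fun n => hKS _ ⟨Ps n, mem_insert_of_mem _ ⟨n, rfl⟩, rfl⟩⟩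

lemma exists_continuous_abs_sub_le_of_isCompact {X U : Type*} [TopologicalSpace X]
    [MetrizableSpace X] [MeasurableSpace X] [BorelSpace X] [TopologicalSpace U]
    [MetrizableSpace U] [MeasurableSpace U] (ν : Measure X) [IsFiniteMeasure ν]
    {g : X × U → ℝ} (hg : Measurable g) (hgu : ∀ x, Continuous fun u => g (x, u))
    {C : ℝ} (hC0 : 0 ≤ C) (hC : ∀ z, |g z| ≤ C) {K : Set U} (hK : IsCompact K)
    {ε : ℝ} (hε : 0 < ε) :
    ∃ g' : X × U → ℝ, Continuous g' ∧ (∀ z, |g' z| ≤ C) ∧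
      ∃ F : X → ℝ, Integrable F ν ∧ (∀ x, 0 ≤ F x) ∧ ∫ x, F x ∂ν ≤ ε ∧
        ∀ x, ∀ u ∈ K, |g (x, u) - g' (x, u)| ≤ F x := by
  have := isCompact_iff_compactSpace.1 hK
  let _ : MeasurableSpace C(K, ℝ) := borel _
  have : BorelSpace C(K, ℝ) := ⟨rfl⟩
  let G : X → C(K, ℝ) := fun x => ⟨fun u => g (x, u), (hgu x).comp continuous_subtype_val⟩
  have hG : Integrable G ν :=
    .of_bound (ContinuousMap.measurable_of_forall_measurable_apply fun u =>
        hg.comp measurable_prodMk_right).aestronglyMeasurable C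
      (ae_of_all _ fun x => (ContinuousMap.norm_le _ hC0).2 fun u => hC _)
  obtain ⟨H, hGH, hH⟩ := hG.exists_boundedContinuous_integral_sub_le hε
  have hCC : -C ≤ C := by linarith
  let φ : C(Prod.snd ⁻¹' K, ℝ) :=
    ⟨fun z => projIcc (-C) C hCC (H z.1.1 ⟨z.1.2, z.2⟩), by fun_prop⟩
  obtain ⟨g', hg'C, hg'φ⟩ := ContinuousMap.exists_restrict_eq_forall_mem_of_closed φ
    (fun z => Subtype.prop _) (nonempty_Icc.2 hCC) (hK.isClosed.preimage continuous_snd)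
  refine ⟨g', g'.continuous, fun z => abs_le.2 (hg'C z), fun x => ‖G x - H x‖,
    (hG.sub hH).norm, fun x => norm_nonneg _, hGH, fun x u hu => ?_⟩
  have hg' : g' (x, u) = projIcc (-C) C hCC (H x ⟨u, hu⟩) :=
    DFunLike.congr_fun hg'φ ⟨(x, u), hu⟩
  calc |g (x, u) - g' (x, u)|
      = |(projIcc (-C) C hCC (g (x, u)) : ℝ) - projIcc (-C) C hCC (H x ⟨u, hu⟩)| := by
        rw [projIcc_of_mem hCC (abs_le.1 (hC _)), hg']
    _ ≤ |g (x, u) - H x ⟨u, hu⟩| := abs_projIcc_sub_projIcc hCC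
    _ ≤ ‖G x - H x‖ := (G x - H x).norm_coe_le_norm ⟨u, hu⟩

lemma abs_integral_sub_integral_le_of_map_fst {X U : Type*} [MeasurableSpace X]
    [MeasurableSpace U] {m : Measure (X × U)} [IsFiniteMeasure m] {ν : Measure X}
    (hm : m.map Prod.fst = ν) {g g' : X × U → ℝ} (hg : AEStronglyMeasurable g m)
    (hg' : AEStronglyMeasurable g' m) {C : ℝ} (hC : ∀ z, |g z| ≤ C) (hC' : ∀ z, |g' z| ≤ C)
    {K : Set U} (hK : MeasurableSet K) {F : X → ℝ} (hF : Integrable F ν) (hF0 : ∀ x, 0 ≤ F x)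
    (hgF : ∀ x, ∀ u ∈ K, |g (x, u) - g' (x, u)| ≤ F x) :
    |∫ z, g z ∂m - ∫ z, g' z ∂m| ≤ ∫ x, F x ∂ν + 2 * C * (m.map Prod.snd).real Kᶜ := by
  have hgi : Integrable g m := .of_bound hg C (ae_of_all _ hC)
  have hg'i : Integrable g' m := .of_bound hg' C (ae_of_all _ hC')
  have hFm : Integrable (fun z => F z.1) m := by
    rw [← hm] at hF; exact hF.comp_measurable measurable_fst
  have hS : MeasurableSet (Prod.snd ⁻¹' Kᶜ : Set (X × U)) := measurable_snd hK.compl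
  have hpt : ∀ z, |g z - g' z| ≤ F z.1 + (Prod.snd ⁻¹' Kᶜ).indicator (fun _ => 2 * C) z := by
    rintro ⟨x, u⟩
    by_cases hu : u ∈ K
    · simpa [hu] using hgF x u hu
    · have := abs_sub (g (x, u)) (g' (x, u))
      simp only [indicator_of_mem (show (x, u) ∈ Prod.snd ⁻¹' Kᶜ from hu)]
      linarith [hC (x, u), hC' (x, u), hF0 x]
  calc |∫ z, g z ∂m - ∫ z, g' z ∂m| = |∫ z, g z - g' z ∂m| := by rw [integral_sub hgi hg'i]
    _ ≤ ∫ z, |g z - g' z| ∂m := abs_integral_le_integral_abs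
    _ ≤ ∫ z, F z.1 + (Prod.snd ⁻¹' Kᶜ).indicator (fun _ => 2 * C) z ∂m :=
        integral_mono (hgi.sub hg'i).abs (hFm.add ((integrable_const _).indicator hS)) hpt
    _ = ∫ x, F x ∂ν + 2 * C * (m.map Prod.snd).real Kᶜ := by
        rw [integral_add hFm ((integrable_const _).indicator hS), integral_indicator_const _ hS,
          map_measureReal_apply measurable_snd hK.compl,
          ← hm, integral_map measurable_fst.aemeasurable (hm ▸ hF.aestronglyMeasurable),
          smul_eq_mul, mul_comm]

/-- Weak convergence of probability measures on a product of Polish spaces with a common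
first marginal upgrades to w-s (setwise-in-x, weak-in-u) convergence. -/
theorem stmt0 {X U : Type*} [MeasurableSpace X] [TopologicalSpace X] [PolishSpace X]
    [BorelSpace X] [MeasurableSpace U] [TopologicalSpace U] [PolishSpace U] [BorelSpace U]
    (μn : ℕ → Measure (X × U)) (μ : Measure (X × U)) (ν : Measure X)
    [∀ n, IsProbabilityMeasure (μn n)] [IsProbabilityMeasure μ]
    (hmargn : ∀ n, (μn n).map Prod.fst = ν) (hmarg : μ.map Prod.fst = ν)
    (hweak : ∀ g : X × U → ℝ, Continuous g → (∃ C, ∀ z, |g z| ≤ C) →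
      Tendsto (fun n => ∫ z, g z ∂(μn n)) atTop (𝓝 (∫ z, g z ∂μ))) :
    ∀ g : X × U → ℝ, Measurable g → (∃ C, ∀ z, |g z| ≤ C) →
      (∀ x : X, Continuous fun u => g (x, u)) →
      Tendsto (fun n => ∫ z, g z ∂(μn n)) atTop (𝓝 (∫ z, g z ∂μ)) := by
  rintro g hg ⟨C₀, hC₀⟩ hgu
  set C := max C₀ 0
  have hC : ∀ z, |g z| ≤ C := fun z => (hC₀ z).trans (le_max_left _ _)
  have : IsFiniteMeasure ν := hmarg ▸ inferInstance
  let P : ProbabilityMeasure (X × U) := ⟨μ, inferInstance⟩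
  let Ps n : ProbabilityMeasure (X × U) := ⟨μn n, inferInstance⟩
  have hPs : Tendsto Ps atTop (𝓝 P) :=
    ProbabilityMeasure.tendsto_iff_forall_integral_tendsto.2 fun f =>
      hweak f f.continuous ⟨‖f‖, fun z => by simpa using f.norm_coe_le_norm z⟩
  have hsnd := ((ProbabilityMeasure.continuous_map continuous_snd).tendsto P).comp hPs
  refine tendsto_of_forall_dist_le fun ε hε => ?_
  set δ := ε / (1 + 2 * C)
  have hδ : 0 < δ := by positivity
  obtain ⟨K, hK, hKμ, hKμn⟩ :=
    ProbabilityMeasure.exists_isCompact_measure_compl_le_of_tendsto hsnd (ENNReal.ofReal_pos.2 hδ)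
  obtain ⟨g', hg'c, hg'C, F, hF, hF0, hFδ, hgF⟩ :=
    exists_continuous_abs_sub_le_of_isCompact ν hg hgu (le_max_right _ _) hC hK hδ
  have key : ∀ (m : Measure (X × U)) [IsProbabilityMeasure m], m.map Prod.fst = ν →
      m.map Prod.snd Kᶜ ≤ ENNReal.ofReal δ → dist (∫ z, g z ∂m) (∫ z, g' z ∂m) ≤ ε :=
    fun m _ hm hmK => calc
      _ ≤ ∫ x, F x ∂ν + 2 * C * (m.map Prod.snd).real Kᶜ :=
          abs_integral_sub_integral_le_of_map_fst hm hg.aestronglyMeasurable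
            hg'c.aestronglyMeasurable hC hg'C hK.isClosed.measurableSet hF hF0 hgF
      _ ≤ δ + 2 * C * δ := by gcongr; exact ENNReal.toReal_le_of_le_ofReal hδ.le hmK
      _ = ε := by rw [← one_add_mul, mul_div_cancel₀ _ (by positivity)]
  exact ⟨_, _, hweak g' hg'c ⟨C, hg'C⟩, fun n => key (μn n) (hmargn n) (hKμn n),
    key μ hmarg hKμ⟩
end

section
/- Let X = ℝ^d with Lebesgue measure λ, and let ψ be a σ-finite measure on ℝ^d with ψ ≪ λ and density h = dψ/dλ strictly positive λ-a.e. Then for every f ∈ L¹(λ), the measure F(A) = ∫_A f dλ satisfies F ≪ ψ. Consequently, if kernels γ_n → γ in the Young topology at input ψ, then for every f ∈ L¹(λ) and every bounded g: ℝ^d × U → ℝ continuous in u for each x, ∫ f(x) ∫ g(x,u) γ_n(du|x) λ(dx) → ∫ f(x) ∫ g(x,u) γ(du|x) λ(dx). -/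
open MeasureTheory ProbabilityTheory Filter Topology
open scoped ENNReal

/-!
Since the density `h` of `ψ` is positive a.e., `ψ`-null sets are Lebesgue-null. For the
convergence, put `J_n x = ∫ g(x, u) γ_n(du|x)`, bounded by `sup |g|`. Testing Young convergence
against `k(x) g(x, u)` with `k` bounded gives `∫ k h J_n dλ → ∫ k h J dλ`. As `h < ∞` a.e. (by
σ-finiteness of `ψ`), truncations of `f / h`, multiplied by `h`, converge to `f` in `L¹(λ)` by
dominated convergence; the uniform bound on `J_n` makes this approximation uniform in `n`, so the
convergence passes to `f`.
-/

theorem abs_max_neg_min_le_abs {M : ℝ} (hM : 0 ≤ M) (t : ℝ) : |max (-M) (min M t)| ≤ |t| := by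
  rw [abs_le]
  constructor
  · exact le_max_of_le_right (le_min (by linarith [abs_nonneg t]) (neg_abs_le t))
  · exact max_le (by linarith [abs_nonneg t]) ((min_le_right _ _).trans (le_abs_self t))

theorem abs_max_neg_min_le {M : ℝ} (hM : 0 ≤ M) (t : ℝ) : |max (-M) (min M t)| ≤ M :=
  abs_le.2 ⟨le_max_left _ _, max_le (by linarith) (min_le_left _ _)⟩

theorem max_neg_min_eq_self {M t : ℝ} (ht : |t| ≤ M) : max (-M) (min M t) = t := by
  rw [min_eq_right (abs_le.1 ht).2, max_eq_right (abs_le.1 ht).1]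

section

variable {α : Type*} [MeasurableSpace α] {μ : Measure α}

theorem ae_lt_top_of_sigmaFinite_withDensity [SigmaFinite μ] {h : α → ℝ≥0∞} (hh : Measurable h)
    [SigmaFinite (μ.withDensity h)] : ∀ᵐ x ∂μ, h x < ∞ := by
  filter_upwards [Measure.rnDeriv_withDensity μ hh, Measure.rnDeriv_lt_top (μ.withDensity h) μ]
    with x hx hlt
  rwa [← hx]

theorem abs_integral_mul_sub_integral_mul_le {f e I : α → ℝ} {C : ℝ} (hf : Integrable f μ)
    (he : Integrable e μ) (hI : AEStronglyMeasurable I μ) (hIC : ∀ x, |I x| ≤ C) :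
    |∫ x, f x * I x ∂μ - ∫ x, e x * I x ∂μ| ≤ C * ∫ x, |f x - e x| ∂μ := by
  have hIC' : ∀ᵐ x ∂μ, ‖I x‖ ≤ C := ae_of_all _ hIC
  rw [← integral_sub (hf.mul_bdd hI hIC') (he.mul_bdd hI hIC'), ← Real.norm_eq_abs,
    ← integral_const_mul C (fun x => |f x - e x|)]
  refine norm_integral_le_of_norm_le ((hf.sub he).abs.const_mul C) (ae_of_all _ fun x => ?_)
  rw [Real.norm_eq_abs, ← sub_mul, abs_mul, mul_comm]
  exact mul_le_mul_of_nonneg_right (hIC x) (abs_nonneg _)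

theorem tendsto_integral_mul_of_tendsto_integral_abs_sub {ι : Type*} {l : Filter ι}
    {f : α → ℝ} {e : ℕ → α → ℝ} {J : ι → α → ℝ} {J' : α → ℝ} {C : ℝ}
    (hf : Integrable f μ) (he : ∀ M, Integrable (e M) μ)
    (hfe : Tendsto (fun M => ∫ x, |f x - e M x| ∂μ) atTop (𝓝 0))
    (hJ : ∀ i, AEStronglyMeasurable (J i) μ) (hJC : ∀ i x, |J i x| ≤ C)
    (hJ' : AEStronglyMeasurable J' μ) (hJ'C : ∀ x, |J' x| ≤ C)
    (he_lim : ∀ M, Tendsto (fun i => ∫ x, e M x * J i x ∂μ) l (𝓝 (∫ x, e M x * J' x ∂μ))) :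
    Tendsto (fun i => ∫ x, f x * J i x ∂μ) l (𝓝 (∫ x, f x * J' x ∂μ)) := by
  have hCδ : Tendsto (fun M => C * ∫ x, |f x - e M x| ∂μ) atTop (𝓝 0) := by
    simpa using hfe.const_mul C
  refine TendstoUniformly.tendsto_of_eventually_tendsto
    (p := atTop) (F := fun M i => ∫ x, e M x * J i x ∂μ) ?_ (Eventually.of_forall he_lim) ?_
  · rw [Metric.tendstoUniformly_iff]
    intro ε hε
    filter_upwards [hCδ.eventually (gt_mem_nhds hε)] with M hM i
    rw [Real.dist_eq]
    exact (abs_integral_mul_sub_integral_mul_le hf (he M) (hJ i) (hJC i)).trans_lt hM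
  · rw [tendsto_iff_dist_tendsto_zero]
    refine squeeze_zero (fun _ => dist_nonneg) (fun M => ?_) hCδ
    rw [Real.dist_eq, abs_sub_comm]
    exact abs_integral_mul_sub_integral_mul_le hf (he M) hJ' hJ'C

theorem exists_bounded_mul_tendsto_integral_abs_sub {r : α → ℝ} (hr : Measurable r)
    (hr0 : ∀ᵐ x ∂μ, r x ≠ 0) {f : α → ℝ} (hf : Integrable f μ) :
    ∃ k : ℕ → α → ℝ, (∀ M, Measurable (k M)) ∧ (∀ M x, |k M x| ≤ M) ∧
      (∀ M, Integrable (fun x => k M x * r x) μ) ∧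
      Tendsto (fun M => ∫ x, |f x - k M x * r x| ∂μ) atTop (𝓝 0) := by
  set f₀ := hf.aestronglyMeasurable.mk f
  have hff₀ : f =ᵐ[μ] f₀ := hf.aestronglyMeasurable.ae_eq_mk
  let k : ℕ → α → ℝ := fun M x => max (-M) (min M (f₀ x / r x))
  have hk : ∀ M, Measurable (k M) := fun M =>
    measurable_const.max <| measurable_const.min <|
      hf.aestronglyMeasurable.stronglyMeasurable_mk.measurable.div hr
  have hkr_le : ∀ M, ∀ᵐ x ∂μ, |k M x * r x| ≤ |f x| := fun M => by
    filter_upwards [hff₀] with x hx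
    rw [hx, abs_mul]
    rcases eq_or_ne (r x) 0 with h0 | h0
    · simp [h0]
    calc |k M x| * |r x| ≤ |f₀ x / r x| * |r x| :=
          mul_le_mul_of_nonneg_right (abs_max_neg_min_le_abs M.cast_nonneg _) (abs_nonneg _)
      _ = |f₀ x| := by rw [abs_div, div_mul_cancel₀ _ (abs_ne_zero.2 h0)]
  have hkr : ∀ M, Integrable (fun x => k M x * r x) μ := fun M =>
    hf.norm.mono' ((hk M).mul hr).aestronglyMeasurable (hkr_le M)
  refine ⟨k, hk, fun M x => abs_max_neg_min_le M.cast_nonneg _, hkr, ?_⟩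
  have hlim : ∀ᵐ x ∂μ, Tendsto (fun M => |f x - k M x * r x|) atTop (𝓝 0) := by
    filter_upwards [hff₀, hr0] with x hx h0
    refine tendsto_const_nhds.congr' ?_
    filter_upwards [eventually_ge_atTop ⌈|f₀ x / r x|⌉₊] with M hM
    rw [show k M x = f₀ x / r x from max_neg_min_eq_self (Nat.ceil_le.1 hM),
      div_mul_cancel₀ _ h0, hx, sub_self, abs_zero]
  have hbound : ∀ M, ∀ᵐ x ∂μ, ‖|f x - k M x * r x|‖ ≤ 2 * |f x| := fun M => by
    filter_upwards [hkr_le M] with x hx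
    rw [Real.norm_eq_abs, abs_abs]
    linarith [abs_sub (f x) (k M x * r x)]
  simpa using tendsto_integral_of_dominated_convergence (fun x => 2 * |f x|)
    (fun M => (hf.sub (hkr M)).abs.aestronglyMeasurable) (hf.abs.const_mul 2) hbound hlim

theorem tendsto_integral_mul_of_forall_bounded_withDensity {ι : Type*} {l : Filter ι}
    {h : α → ℝ≥0∞} (hh : Measurable h) (h0 : ∀ᵐ x ∂μ, h x ≠ 0) (htop : ∀ᵐ x ∂μ, h x < ∞)
    {J : ι → α → ℝ} {J' : α → ℝ} {C : ℝ}
    (hJ : ∀ i, AEStronglyMeasurable (J i) μ) (hJC : ∀ i x, |J i x| ≤ C)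
    (hJ' : AEStronglyMeasurable J' μ) (hJ'C : ∀ x, |J' x| ≤ C)
    (hconv : ∀ k : α → ℝ, Measurable k → (∃ B, ∀ x, |k x| ≤ B) →
      Tendsto (fun i => ∫ x, k x * J i x ∂μ.withDensity h) l
        (𝓝 (∫ x, k x * J' x ∂μ.withDensity h)))
    {f : α → ℝ} (hf : Integrable f μ) :
    Tendsto (fun i => ∫ x, f x * J i x ∂μ) l (𝓝 (∫ x, f x * J' x ∂μ)) := by
  have hr0 : ∀ᵐ x ∂μ, (h x).toReal ≠ 0 := by
    filter_upwards [h0, htop] with x h0 htop using ENNReal.toReal_ne_zero.2 ⟨h0, htop.ne⟩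
  obtain ⟨k, hk, hkM, hkr, hfk⟩ :=
    exists_bounded_mul_tendsto_integral_abs_sub hh.ennreal_toReal hr0 hf
  refine tendsto_integral_mul_of_tendsto_integral_abs_sub hf hkr hfk hJ hJC hJ' hJ'C fun M => ?_
  have hdens : ∀ I : α → ℝ,
      ∫ x, k M x * I x ∂μ.withDensity h = ∫ x, k M x * (h x).toReal * I x ∂μ := fun I => by
    rw [integral_withDensity_eq_integral_toReal_smul hh htop]
    congr 1 with x
    rw [smul_eq_mul]
    ring
  simpa only [hdens] using hconv (k M) (hk M) ⟨M, hkM M⟩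

end

theorem stmt16_general {d : ℕ} {U : Type*} [MeasurableSpace U] [TopologicalSpace U]
    (ψ : Measure (Fin d → ℝ)) (hdens : (Fin d → ℝ) → ℝ≥0∞)
    (hdmeas : Measurable hdens)
    (hψ : ψ = (volume : Measure (Fin d → ℝ)).withDensity hdens)
    [SigmaFinite ψ]
    (hpos : ∀ᵐ x ∂(volume : Measure (Fin d → ℝ)), 0 < hdens x)
    (γn : ℕ → Kernel (Fin d → ℝ) U) (γ : Kernel (Fin d → ℝ) U)
    (hγn : ∀ n, IsMarkovKernel (γn n)) (hγ : IsMarkovKernel γ)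
    (hyoung : ∀ g : (Fin d → ℝ) × U → ℝ, Measurable g → (∃ C, ∀ z, |g z| ≤ C) →
      (∀ x, Continuous fun u => g (x, u)) →
      Tendsto (fun n => ∫ x, ∫ u, g (x, u) ∂(γn n x) ∂ψ) atTop
        (𝓝 (∫ x, ∫ u, g (x, u) ∂(γ x) ∂ψ))) :
    (∀ f : (Fin d → ℝ) → ℝ, Integrable f volume →
      ∀ A : Set (Fin d → ℝ), MeasurableSet A → ψ A = 0 → ∫ x in A, f x ∂volume = 0) ∧
    (∀ f : (Fin d → ℝ) → ℝ, Integrable f volume →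
      ∀ g : (Fin d → ℝ) × U → ℝ, Measurable g → (∃ C, ∀ z, |g z| ≤ C) →
      (∀ x, Continuous fun u => g (x, u)) →
      Tendsto (fun n => ∫ x, f x * ∫ u, g (x, u) ∂(γn n x) ∂volume) atTop
        (𝓝 (∫ x, f x * ∫ u, g (x, u) ∂(γ x) ∂volume))) := by
  subst hψ
  have h0 : ∀ᵐ x ∂volume, hdens x ≠ 0 := hpos.mono fun x hx => hx.ne'
  refine ⟨fun f _ A _ hA => setIntegral_measure_zero f
    (withDensity_absolutelyContinuous' hdmeas.aemeasurable h0 hA), ?_⟩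
  intro f hf g hg ⟨C, hC⟩ hgc
  have hJ : ∀ (κ : Kernel (Fin d → ℝ) U) [IsMarkovKernel κ],
      StronglyMeasurable (fun x => ∫ u, g (x, u) ∂κ x) ∧ ∀ x, |∫ u, g (x, u) ∂κ x| ≤ C :=
    fun κ _ => ⟨hg.stronglyMeasurable.integral_kernel_prod_right',
      fun x => by
        simpa using norm_integral_le_of_norm_le_const (μ := κ x)
          (ae_of_all _ fun u => (Real.norm_eq_abs _).trans_le (hC (x, u)))⟩
  refine tendsto_integral_mul_of_forall_bounded_withDensity hdmeas h0
    (ae_lt_top_of_sigmaFinite_withDensity hdmeas) (fun n => (hJ (γn n)).1.aestronglyMeasurable)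
    (fun n => (hJ (γn n)).2) (hJ γ).1.aestronglyMeasurable (hJ γ).2 ?_ hf
  rintro k hk ⟨B, hB⟩
  have hkg := hyoung (fun z => k z.1 * g z) ((hk.comp measurable_fst).mul hg)
    ⟨B * C, fun z => by
      rw [abs_mul]
      exact mul_le_mul (hB z.1) (hC z) (abs_nonneg _) ((abs_nonneg _).trans (hB z.1))⟩
    (fun x => (hgc x).const_mul (k x))
  simpa only [integral_const_mul] using hkg

/-- On `ℝ^d`, if `ψ ≪ λ` has an a.e. strictly positive density, then every `F(A) = ∫_A f dλ`
with `f ∈ L¹(λ)` is absolutely continuous w.r.t. `ψ`; consequently Young-topology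
convergence of kernels at input `ψ` implies Borkar (weak*) convergence: testing against
every `f ∈ L¹(λ)` and bounded `g` continuous in the action. -/
theorem stmt16 {d : ℕ} {U : Type*} [MeasurableSpace U] [TopologicalSpace U]
    [CompactSpace U] [PolishSpace U] [BorelSpace U]
    (ψ : Measure (Fin d → ℝ)) (hdens : (Fin d → ℝ) → ℝ≥0∞)
    (hdmeas : Measurable hdens)
    (hψ : ψ = (volume : Measure (Fin d → ℝ)).withDensity hdens)
    [SigmaFinite ψ]
    (hpos : ∀ᵐ x ∂(volume : Measure (Fin d → ℝ)), 0 < hdens x)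
    (γn : ℕ → Kernel (Fin d → ℝ) U) (γ : Kernel (Fin d → ℝ) U)
    (hγn : ∀ n, IsMarkovKernel (γn n)) (hγ : IsMarkovKernel γ)
    (hyoung : ∀ g : (Fin d → ℝ) × U → ℝ, Measurable g → (∃ C, ∀ z, |g z| ≤ C) →
      (∀ x, Continuous fun u => g (x, u)) →
      Tendsto (fun n => ∫ x, ∫ u, g (x, u) ∂(γn n x) ∂ψ) atTop
        (𝓝 (∫ x, ∫ u, g (x, u) ∂(γ x) ∂ψ))) :
    (∀ f : (Fin d → ℝ) → ℝ, Integrable f volume →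
      ∀ A : Set (Fin d → ℝ), MeasurableSet A → ψ A = 0 → ∫ x in A, f x ∂volume = 0) ∧
    (∀ f : (Fin d → ℝ) → ℝ, Integrable f volume →
      ∀ g : (Fin d → ℝ) × U → ℝ, Measurable g → (∃ C, ∀ z, |g z| ≤ C) →
      (∀ x, Continuous fun u => g (x, u)) →
      Tendsto (fun n => ∫ x, f x * ∫ u, g (x, u) ∂(γn n x) ∂volume) atTop
        (𝓝 (∫ x, f x * ∫ u, g (x, u) ∂(γ x) ∂volume))) :=
  stmt16_general ψ hdens hdmeas hψ hpos γn γ hγn hγ hyoung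
end
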